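/- arXiv:1911.08887 — 3 statements merged into one kernel-verified Lean document; each statement's English description precedes it below -/
import Mathlib

section
/- For all γ ∈ (0,1] and all integers k ≥ 2, t ≥ 1, ℓ ≥ 1 there exists m₀ ∈ ℕ such that for every m ≥ m₀ there exists n₀ ∈ ℕ with the following property. Let n ≥ n₀ with ℓ ∣ n, let G be an (n,k,γ)-graph, let 𝒫 be a partition of V(G) into sets of size ℓ, and let 𝒫₀ ⊆ 𝒫 with |𝒫₀| = t. If 𝒫′ ⊆ 𝒫 \ 𝒫₀ of size m is chosen uniformly at random, then with probability at least 1 − e^{−√m}, the induced subgraph G[⋃(𝒫₀ ∪ 𝒫′)] has minimum codegree at least (1/2 + γ/2)·ℓ(m+t). -/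
/-!
If `𝒫'` is bad, some `(k-1)`-set `S ⊆ U = ⋃(𝒫₀ ∪ 𝒫')` lies in few edges of `G[U]`. Split `𝒫'` into
the classes `F` meeting `S` (fewer than `k` of them) and the rest `R`. Every vertex `v` of `⋃R` in
the neighbourhood `N(S)` gives the edge `S ∪ {v}` of `G[U]`, so the deficiencies `|A \ N(S)|`,
`A ∈ R`, sum to much more than their mean: over all classes they sum to `n - |N(S)| ≤ (1/2 - γ)n`.
For fixed `F` and `S` a Chernoff bound for uniform `r`-subsets makes this exponentially unlikely in
`m`; it holds because `P(T ⊆ R) ≤ (r/N)^|T|`, so uniform subsets are dominated by independent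
sampling. A union bound over the `O(m^k)` choices of `F` and of `S ⊆ ⋃(𝒫₀ ∪ F)` finishes the proof.
-/

open Finset Real

theorem Nat.choose_sub_mul_pow_le {N r s : ℕ} (hsr : s ≤ r) (hrN : r ≤ N) :
    (N - s).choose (r - s) * N ^ s ≤ N.choose r * r ^ s := by
  induction s with
  | zero => simp
  | succ s ih =>
    obtain ⟨a, ha⟩ : ∃ a, N - s = a + 1 := ⟨N - (s + 1), by omega⟩
    obtain ⟨b, hb⟩ : ∃ b, r - s = b + 1 := ⟨r - (s + 1), by omega⟩
    have ih := ih (by omega)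
    rw [ha, hb] at ih
    rw [show N - (s + 1) = a by omega, show r - (s + 1) = b by omega]
    have hratio : (b + 1) * N ≤ r * (a + 1) := by
      rw [← ha, ← hb, Nat.sub_mul, Nat.mul_sub]
      exact Nat.sub_le_sub_left (by nlinarith) _
    refine Nat.le_of_mul_le_mul_left ?_ (Nat.succ_pos a)
    calc (a + 1) * (a.choose b * N ^ (s + 1))
        = (a + 1) * a.choose b * N ^ s * N := by ring
      _ = (a + 1).choose (b + 1) * N ^ s * ((b + 1) * N) := by
        rw [Nat.add_one_mul_choose_eq]; ring
      _ ≤ N.choose r * r ^ s * (r * (a + 1)) := Nat.mul_le_mul ih hratio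
      _ = (a + 1) * (N.choose r * r ^ (s + 1)) := by ring

theorem card_filter_powersetCard_superset_le {α : Type*} [DecidableEq α] {Q T : Finset α}
    {r : ℕ} (hTQ : T ⊆ Q) (hr : r ≤ #Q) :
    (#{R ∈ Q.powersetCard r | T ⊆ R} : ℝ) ≤ (#Q).choose r * (r / #Q) ^ #T := by
  rcases lt_or_ge r #T with hTr | hTr
  · rw [filter_false_of_mem fun R hR hTR => ?_, card_empty, Nat.cast_zero]
    · positivity
    · have := card_le_card hTR
      rw [(mem_powersetCard.1 hR).2] at this
      omega
  rw [card_filter_powersetCard_subset T Q r hTQ hTr]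
  rcases (#Q).eq_zero_or_pos with hQ | hQ
  · have hT : #T = 0 := by have := card_le_card hTQ; omega
    simp [hQ, hT]
  rw [div_pow, mul_div_assoc', le_div_iff₀ (by positivity)]
  exact_mod_cast Nat.choose_sub_mul_pow_le hTr hr

theorem sum_powersetCard_prod_one_add_le {α : Type*} [DecidableEq α] (Q : Finset α) {r : ℕ}
    (hr : r ≤ #Q) {w : α → ℝ} (hw : ∀ a ∈ Q, 0 ≤ w a) :
    ∑ R ∈ Q.powersetCard r, ∏ a ∈ R, (1 + w a)
      ≤ (#Q).choose r * ∏ a ∈ Q, (1 + r / #Q * w a) := by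
  have hprod_nonneg : ∀ T ∈ Q.powerset, 0 ≤ ∏ a ∈ T, w a := fun T hT =>
    prod_nonneg fun a ha => hw a (mem_powerset.1 hT ha)
  calc ∑ R ∈ Q.powersetCard r, ∏ a ∈ R, (1 + w a)
      = ∑ R ∈ Q.powersetCard r, ∑ T ∈ Q.powerset, if T ⊆ R then ∏ a ∈ T, w a else 0 := by
        refine sum_congr rfl fun R hR => ?_
        rw [prod_one_add, ← sum_filter]
        congr 1
        ext T
        simp only [mem_filter, mem_powerset]
        exact ⟨fun h => ⟨h.trans (mem_powersetCard.1 hR).1, h⟩, And.right⟩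
    _ = ∑ T ∈ Q.powerset, #{R ∈ Q.powersetCard r | T ⊆ R} * ∏ a ∈ T, w a := by
        rw [sum_comm]
        refine sum_congr rfl fun T _ => ?_
        rw [← sum_filter, sum_const, nsmul_eq_mul]
    _ ≤ ∑ T ∈ Q.powerset, (#Q).choose r * (r / #Q) ^ #T * ∏ a ∈ T, w a := by
        refine sum_le_sum fun T hT => mul_le_mul_of_nonneg_right ?_ (hprod_nonneg T hT)
        exact card_filter_powersetCard_superset_le (mem_powerset.1 hT) hr
    _ = (#Q).choose r * ∏ a ∈ Q, (1 + r / #Q * w a) := by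
        rw [prod_one_add, mul_sum]
        refine sum_congr rfl fun T _ => ?_
        rw [prod_mul_distrib, prod_const, mul_assoc]

theorem exp_mul_le_one_add_mul {x : ℝ} (hx₀ : 0 ≤ x) (hx₁ : x ≤ 1) (M : ℝ) :
    exp (x * M) ≤ 1 + x * (exp M - 1) := by
  have h := convexOn_exp.2 (Set.mem_univ 0) (Set.mem_univ M) (sub_nonneg.2 hx₁) hx₀ (by ring)
  simp only [smul_eq_mul, mul_zero, zero_add, exp_zero] at h
  linarith

theorem sum_powersetCard_exp_mul_sum_le {α : Type*} [DecidableEq α] (Q : Finset α) {r : ℕ}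
    (hr : r ≤ #Q) {d : α → ℝ} {L β lam : ℝ} (hL : 0 < L) (hd : ∀ a ∈ Q, d a ∈ Set.Icc 0 L)
    (hlam : 0 ≤ lam) (hsum : ∑ a ∈ Q, d a ≤ β * L * #Q) :
    ∑ R ∈ Q.powersetCard r, exp (lam * ∑ a ∈ R, d a)
      ≤ (#Q).choose r * exp (β * r * (exp (lam * L) - 1)) := by
  set c := exp (lam * L) - 1
  have hc : 0 ≤ c := sub_nonneg.2 (one_le_exp (by positivity))
  have hw : ∀ a ∈ Q, 0 ≤ c * (d a / L) := fun a ha => mul_nonneg hc (div_nonneg (hd a ha).1 hL.le)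
  -- convexity of `exp` between `0` and `λL`
  have hfactor : ∀ R ∈ Q.powersetCard r,
      exp (lam * ∑ a ∈ R, d a) ≤ ∏ a ∈ R, (1 + c * (d a / L)) := by
    intro R hR
    rw [mul_sum, exp_sum]
    refine prod_le_prod (fun _ _ => (exp_pos _).le) fun a ha => ?_
    have hda := hd a ((mem_powersetCard.1 hR).1 ha)
    have := exp_mul_le_one_add_mul (div_nonneg hda.1 hL.le) ((div_le_one hL).2 hda.2) (lam * L)
    rw [show d a / L * (lam * L) = lam * d a by field_simp] at this
    linarith [mul_comm (d a / L) c]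
  have hexponent : ∑ a ∈ Q, r / #Q * (c * (d a / L)) ≤ β * r * c := by
    rcases (#Q).eq_zero_or_pos with hQ | hQ
    · obtain rfl : r = 0 := by omega
      simp
    calc ∑ a ∈ Q, r / #Q * (c * (d a / L)) = r / #Q * c / L * ∑ a ∈ Q, d a := by
          rw [mul_sum]; exact sum_congr rfl fun _ _ => by ring
      _ ≤ r / #Q * c / L * (β * L * #Q) := by gcongr
      _ = β * r * c := by field_simp
  calc ∑ R ∈ Q.powersetCard r, exp (lam * ∑ a ∈ R, d a)
      ≤ ∑ R ∈ Q.powersetCard r, ∏ a ∈ R, (1 + c * (d a / L)) := sum_le_sum hfactor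
    _ ≤ (#Q).choose r * ∏ a ∈ Q, (1 + r / #Q * (c * (d a / L))) :=
        sum_powersetCard_prod_one_add_le Q hr hw
    _ ≤ (#Q).choose r * exp (β * r * c) := by
        gcongr
        refine (prod_le_prod (fun a ha => ?_) fun a _ => ?_).trans
          ((exp_sum Q _).symm.le.trans (exp_le_exp.2 hexponent))
        · have := hw a ha; positivity
        · linarith [add_one_le_exp (r / #Q * (c * (d a / L)))]

noncomputable def chernoffRate (β τ : ℝ) : ℝ := τ * log (τ / β) - τ + β

theorem chernoffRate_pos {β τ : ℝ} (hβ : 0 < β) (hβτ : β < τ) : 0 < chernoffRate β τ := by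
  have hτ : 0 < τ := hβ.trans hβτ
  have hlog : log (β / τ) < β / τ - 1 :=
    log_lt_sub_one_of_pos (div_pos hβ hτ) (by rw [ne_eq, div_eq_one_iff_eq hτ.ne']; exact hβτ.ne)
  rw [show log (β / τ) = -log (τ / β) by rw [← log_inv, inv_div]] at hlog
  have := mul_lt_mul_of_pos_left hlog hτ
  rw [mul_sub, mul_div_cancel₀ _ hτ.ne'] at this
  unfold chernoffRate
  linarith

theorem card_filter_powersetCard_le_sum {α : Type*} [DecidableEq α] (Q : Finset α) {r : ℕ}
    (hr : r ≤ #Q) {d : α → ℝ} {L β τ : ℝ} (hL : 0 < L) (hd : ∀ a ∈ Q, d a ∈ Set.Icc 0 L)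
    (hβ : 0 < β) (hβτ : β < τ) (hsum : ∑ a ∈ Q, d a ≤ β * L * #Q) :
    (#{R ∈ Q.powersetCard r | τ * L * r ≤ ∑ a ∈ R, d a} : ℝ)
      ≤ (#Q).choose r * exp (-(r * chernoffRate β τ)) := by
  set lam := log (τ / β) / L
  have hτβ : 0 < τ / β := div_pos (hβ.trans hβτ) hβ
  have hlam : 0 ≤ lam := div_nonneg (log_nonneg ((one_le_div hβ).2 hβτ.le)) hL.le
  have hmgf := sum_powersetCard_exp_mul_sum_le Q hr hL hd hlam hsum
  rw [div_mul_cancel₀ _ hL.ne', exp_log hτβ] at hmgf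
  -- Markov's inequality for `exp (λ ∑ d)`
  have hmarkov : #{R ∈ Q.powersetCard r | τ * L * r ≤ ∑ a ∈ R, d a} • exp (lam * (τ * L * r))
      ≤ ∑ R ∈ Q.powersetCard r, exp (lam * ∑ a ∈ R, d a) :=
    (card_nsmul_le_sum _ _ _ fun R hR =>
      exp_le_exp.2 (mul_le_mul_of_nonneg_left (mem_filter.1 hR).2 hlam)).trans
      (sum_le_sum_of_subset_of_nonneg (filter_subset _ _) fun _ _ _ => (exp_pos _).le)
  rw [nsmul_eq_mul, ← le_div_iff₀ (exp_pos _)] at hmarkov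
  refine hmarkov.trans ((div_le_div_of_nonneg_right hmgf (exp_pos _).le).trans_eq ?_)
  rw [mul_div_assoc, ← exp_sub, show lam * (τ * L * r) = r * τ * log (τ / β) by
    simp only [lam]; field_simp]
  congr 2
  unfold chernoffRate
  field_simp
  ring

open Filter in
theorem eventually_mul_pow_mul_exp_le (K : ℝ) {h : ℝ} (hh : 0 < h) (k : ℕ) :
    ∀ᶠ m : ℕ in atTop, K * ((m : ℝ) + 1) ^ k * exp (-(h * m)) ≤ exp (-√m) := by
  filter_upwards [eventually_ge_atTop ⌈(2 * (2 * k + 1) / h) ^ 2⌉₊,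
    eventually_ge_atTop ⌈2 * log K / h⌉₊] with m hm₁ hm₂
  have hsqrt : 2 * (2 * k + 1) / h ≤ √m :=
    (le_sqrt (by positivity) m.cast_nonneg).2 (Nat.ceil_le.1 hm₁)
  rw [div_le_iff₀ hh] at hsqrt
  have hlog : 2 * log K ≤ h * m := by rw [← div_le_iff₀' hh]; exact Nat.ceil_le.1 hm₂
  have hm : √m * √m = m := mul_self_sqrt m.cast_nonneg
  have hpow : ((m : ℝ) + 1) ^ k ≤ exp (2 * k * √m) := by
    calc ((m : ℝ) + 1) ^ k ≤ ((√m + 1) ^ 2) ^ k := by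
          gcongr; nlinarith [sqrt_nonneg (m : ℝ)]
      _ ≤ (exp √m ^ 2) ^ k := by gcongr; exact add_one_le_exp _
      _ = exp (2 * k * √m) := by rw [← exp_nat_mul, ← exp_nat_mul]; ring_nf
  calc K * ((m : ℝ) + 1) ^ k * exp (-(h * m))
      ≤ exp (log K) * exp (2 * k * √m) * exp (-(h * m)) := by
        gcongr
        exact le_exp_log K
    _ = exp (log K + 2 * k * √m - h * m) := by rw [sub_eq_add_neg, exp_add, exp_add]
    _ ≤ exp (-√m) := exp_le_exp.2 (by nlinarith [sqrt_nonneg (m : ℝ)])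

theorem one_sub_mul_card_le_card_filter {α : Type*} {s T : Finset α} {p : α → Prop}
    [DecidablePred p] {ε : ℝ} (hT : ∀ x ∈ s, ¬ p x → x ∈ T) (hTs : (#T : ℝ) ≤ ε * #s) :
    (1 - ε) * #s ≤ #{x ∈ s | p x} := by
  have hnot : #{x ∈ s | ¬ p x} ≤ #T :=
    card_le_card fun x hx => hT x (mem_filter.1 hx).1 (mem_filter.1 hx).2
  have hsplit : (#{x ∈ s | p x} : ℝ) + #{x ∈ s | ¬ p x} = #s := by
    exact_mod_cast card_filter_add_card_filter_not p
  have : (#{x ∈ s | ¬ p x} : ℝ) ≤ #T := by exact_mod_cast hnot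
  linarith

theorem sum_choose_mul_choose_mul_exp_le {N m k : ℕ} (c : ℕ → ℕ) (hc : Monotone c) {h : ℝ}
    (hh : 0 ≤ h) (hkm : k ≤ m) :
    ∑ j ∈ range k, (N.choose j : ℝ) * ((c j).choose (k - 1) *
        ((N - j).choose (m - j) * exp (-((m - j : ℕ) * h))))
      ≤ N.choose m * (k * (c k).choose (k - 1) * exp (k * h) * (m + 1) ^ k * exp (-(h * m))) := by
  have hconst : (N.choose m : ℝ) * (k * (c k).choose (k - 1) * exp (k * h) * (m + 1) ^ k *
      exp (-(h * m))) = ∑ _j ∈ range k, (N.choose m : ℝ) *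
        ((m + 1) ^ k * ((c k).choose (k - 1) * (exp (k * h) * exp (-(h * m))))) := by
    rw [sum_const, card_range, nsmul_eq_mul]; ring
  rw [hconst]
  refine sum_le_sum fun j hj => ?_
  have hjk : j < k := mem_range.1 hj
  have hchoose : (N.choose j : ℝ) * (N - j).choose (m - j) = N.choose m * m.choose j := by
    exact_mod_cast (Nat.choose_mul (by omega)).symm
  have hmj : (m.choose j : ℝ) ≤ (m + 1) ^ k := by
    calc (m.choose j : ℝ) ≤ (m : ℝ) ^ j := by exact_mod_cast Nat.choose_le_pow m j
      _ ≤ (m + 1) ^ j := by gcongr; linarith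
      _ ≤ (m + 1) ^ k := pow_le_pow_right₀ (by linarith [m.cast_nonneg (α := ℝ)]) hjk.le
  have hexp : exp (-((m - j : ℕ) * h)) ≤ exp (k * h) * exp (-(h * m)) := by
    rw [← exp_add, Nat.cast_sub (by omega)]
    exact exp_le_exp.2 (by nlinarith [(Nat.cast_le (α := ℝ)).2 hjk.le, j.cast_nonneg (α := ℝ)])
  calc (N.choose j : ℝ) * ((c j).choose (k - 1) *
        ((N - j).choose (m - j) * exp (-((m - j : ℕ) * h))))
      = N.choose m * (m.choose j * ((c j).choose (k - 1) * exp (-((m - j : ℕ) * h)))) := by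
        rw [← mul_assoc (N.choose m : ℝ), ← hchoose]; ring
    _ ≤ N.choose m * ((m + 1) ^ k * ((c k).choose (k - 1) * (exp (k * h) * exp (-(h * m))))) := by
        gcongr
        exact hc hjk.le

section Hypergraph

variable {V : Type*} [Fintype V] [DecidableEq V] {E : Finset (Finset V)} {S : Finset V}

def nbhd (E : Finset (Finset V)) (S : Finset V) : Finset V := {v | v ∉ S ∧ insert v S ∈ E}

theorem mem_nbhd {v : V} : v ∈ nbhd E S ↔ v ∉ S ∧ insert v S ∈ E := by simp [nbhd]

theorem card_filter_superset_le_card_nbhd (hE : ∀ e ∈ E, #e = #S + 1) :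
    #{e ∈ E | S ⊆ e} ≤ #(nbhd E S) := by
  refine card_le_card_of_surjOn (insert · S) fun e he => ?_
  obtain ⟨heE, hSe⟩ := mem_filter.1 he
  obtain ⟨v, hvS, rfl⟩ := exists_eq_insert_iff.2 ⟨hSe, (hE e heE).symm⟩
  exact ⟨v, mem_nbhd.2 ⟨hvS, heE⟩, rfl⟩

theorem card_filter_superset_le_card_sub (hE : ∀ e ∈ E, #e = #S + 1) :
    #{e ∈ E | S ⊆ e} ≤ Fintype.card V - #S :=
  (card_filter_superset_le_card_nbhd hE).trans <| (card_compl S).symm ▸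
    card_le_card fun _ hv => mem_compl.2 (mem_nbhd.1 hv).1

theorem lt_one_half_of_codegree_ge {γ : ℝ} {k : ℕ} (hE : ∀ e ∈ E, #e = k) (hk : 2 ≤ k)
    (hkV : k ≤ Fintype.card V)
    (hdeg : ∀ S : Finset V, #S = k - 1 → (1 / 2 + γ) * Fintype.card V ≤ #{e ∈ E | S ⊆ e}) :
    γ < 1 / 2 := by
  obtain ⟨S, -, hS⟩ := exists_subset_card_eq (show k - 1 ≤ #(univ : Finset V) by simp; omega)
  have hcodeg := card_filter_superset_le_card_sub (E := E) (S := S) fun e he => by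
    rw [hE e he, hS]; omega
  have : (#{e ∈ E | S ⊆ e} : ℝ) + 1 ≤ Fintype.card V := by exact_mod_cast (by omega)
  nlinarith [hdeg S hS]

theorem card_nbhd_inter_le {U : Finset V} (hSU : S ⊆ U) :
    #(nbhd E S ∩ U) ≤ #{e ∈ E | S ⊆ e ∧ e ⊆ U} := by
  refine card_le_card_of_injOn (insert · S) (fun v hv => ?_) fun _ hv _ _ hvw => ?_
  · obtain ⟨hv, hvU⟩ := mem_inter.1 hv
    exact mem_filter.2 ⟨(mem_nbhd.1 hv).2, subset_insert v S, insert_subset hvU hSU⟩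
  · exact (insert_inj (mem_nbhd.1 (mem_inter.1 hv).1).1).1 hvw

end Hypergraph

section Partition

variable {V : Type*} [DecidableEq V] {B : Finset (Finset V)} {l : ℕ}

theorem card_biUnion_id (hB : (B : Set (Finset V)).PairwiseDisjoint id)
    (hl : ∀ A ∈ B, #A = l) : #(B.biUnion id) = #B * l := by
  rw [card_biUnion hB]
  exact (sum_congr rfl hl).trans (by rw [sum_const, smul_eq_mul])

theorem sum_card_sdiff (hB : (B : Set (Finset V)).PairwiseDisjoint id) (X : Finset V) :
    ∑ A ∈ B, #(A \ X) = #(B.biUnion id \ X) := by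
  rw [← card_biUnion (t := (· \ X)) (hB.mono fun _ => sdiff_subset)]
  congr 1
  ext v
  simp only [mem_biUnion]
  grind

theorem sum_card_sdiff_le_card_sub [Fintype V] (hB : (B : Set (Finset V)).PairwiseDisjoint id)
    (X : Finset V) : ∑ A ∈ B, #(A \ X) ≤ Fintype.card V - #X := by
  rw [sum_card_sdiff hB, ← card_compl]
  exact card_le_card fun _ hv => mem_compl.2 (mem_sdiff.1 hv).2

theorem card_filter_inter_nonempty_le (hB : (B : Set (Finset V)).PairwiseDisjoint id)
    (S : Finset V) : #{A ∈ B | (A ∩ S).Nonempty} ≤ #S :=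
  (card_le_card_biUnion ((hB.subset (filter_subset _ _)).mono fun _ => inter_subset_left)
    fun _ hA => (mem_filter.1 hA).2).trans
    (card_le_card (biUnion_subset.2 fun _ _ => inter_subset_right))

end Partition

section LowCodegree

variable {V : Type*} [Fintype V] [DecidableEq V] {E P P₀ : Finset (Finset V)} {k l t m : ℕ}

theorem card_mul_le_sum_card_sdiff_add {R : Finset (Finset V)} {S U : Finset V}
    (hR : (R : Set (Finset V)).PairwiseDisjoint id) (hRl : ∀ A ∈ R, #A = l)
    (hSU : S ⊆ U) (hRU : R.biUnion id ⊆ U) :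
    #R * l ≤ ∑ A ∈ R, #(A \ nbhd E S) + #{e ∈ E | S ⊆ e ∧ e ⊆ U} := by
  rw [← card_biUnion_id hR hRl, sum_card_sdiff hR,
    ← card_sdiff_add_card_inter (R.biUnion id) (nbhd E S)]
  gcongr
  rw [inter_comm]
  exact (card_le_card (inter_subset_inter_left hRU)).trans (card_nbhd_inter_le hSU)

noncomputable def lowCodegreeCover (E P₀ Q : Finset (Finset V)) (k l m : ℕ) (δ : ℝ) :
    Finset (Finset (Finset V)) :=
  (range k).biUnion fun j => (Q.powersetCard j).biUnion fun F =>
    (((P₀ ∪ F).biUnion id).powersetCard (k - 1)).biUnion fun S =>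
      {R ∈ (Q \ F).powersetCard (m - j) |
        (((m - j) * l : ℕ) : ℝ) < ∑ A ∈ R, (#(A \ nbhd E S) : ℝ) + δ}.image (F ∪ ·)

theorem mem_lowCodegreeCover (hPd : (P : Set (Finset V)).PairwiseDisjoint id)
    (hPl : ∀ A ∈ P, #A = l) {P' : Finset (Finset V)} (hP' : P' ∈ (P \ P₀).powersetCard m)
    {S : Finset V} {δ : ℝ} (hSU : S ⊆ (P₀ ∪ P').biUnion id) (hSk : #S + 1 = k)
    (hlow : (#{e ∈ E | S ⊆ e ∧ e ⊆ (P₀ ∪ P').biUnion id} : ℝ) < δ) :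
    P' ∈ lowCodegreeCover E P₀ (P \ P₀) k l m δ := by
  obtain ⟨hP'Q, hP'm⟩ := mem_powersetCard.1 hP'
  have hP'P : P' ⊆ P := hP'Q.trans sdiff_subset
  set F := {A ∈ P' | (A ∩ S).Nonempty}
  have hFP' : F ⊆ P' := filter_subset _ _
  have hFS : #F ≤ #S := card_filter_inter_nonempty_le (hPd.subset hP'P) S
  have hRm : #(P' \ F) = m - #F := by rw [card_sdiff_of_subset hFP', hP'm]
  have hdeficit := card_mul_le_sum_card_sdiff_add (E := E) (R := P' \ F)
    (hPd.subset (sdiff_subset.trans hP'P)) (fun A hA => hPl A (hP'P (mem_sdiff.1 hA).1)) hSU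
    (biUnion_subset_biUnion_of_subset_left _ (sdiff_subset.trans subset_union_right))
  have hSF : S ⊆ (P₀ ∪ F).biUnion id := fun v hv => by
    obtain ⟨A, hA, hvA⟩ := mem_biUnion.1 (hSU hv)
    refine mem_biUnion.2 ⟨A, ?_, hvA⟩
    rcases mem_union.1 hA with hA | hA
    · exact mem_union_left _ hA
    · exact mem_union_right _ (mem_filter.2 ⟨hA, v, mem_inter.2 ⟨hvA, hv⟩⟩)
  simp only [lowCodegreeCover, mem_biUnion, mem_image, mem_filter, mem_powersetCard, mem_range]
  refine ⟨#F, by omega, F, ⟨hFP'.trans hP'Q, rfl⟩, S, ⟨hSF, by omega⟩, P' \ F,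
    ⟨⟨sdiff_subset_sdiff hP'Q le_rfl, hRm⟩, ?_⟩, union_sdiff_of_subset hFP'⟩
  rw [hRm] at hdeficit
  calc (((m - #F) * l : ℕ) : ℝ)
      ≤ ∑ A ∈ P' \ F, (#(A \ nbhd E S) : ℝ) + #{e ∈ E | S ⊆ e ∧ e ⊆ (P₀ ∪ P').biUnion id} := by
        exact_mod_cast hdeficit
    _ < _ := by gcongr

theorem card_deficient_le {γ : ℝ} (hγ : 0 < γ) (hγ₂ : γ < 1 / 2) (hl : 0 < l)
    (hPd : (P : Set (Finset V)).PairwiseDisjoint id) (hPl : ∀ A ∈ P, #A = l)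
    (hPu : P.biUnion id = univ) (hP₀ : P₀ ⊆ P) (ht : #P₀ = t) {F : Finset (Finset V)}
    (hF : F ⊆ P \ P₀) (hFk : #F < k) (hm : 8 * (k + t) ≤ γ * m) (hmN : m ≤ #(P \ P₀))
    {S : Finset V} (hS : (1 / 2 + γ) * Fintype.card V ≤ #(nbhd E S)) :
    (#{R ∈ ((P \ P₀) \ F).powersetCard (m - #F) | (((m - #F) * l : ℕ) : ℝ)
        < ∑ A ∈ R, (#(A \ nbhd E S) : ℝ) + (1 / 2 + γ / 2) * (l * (m + t))} : ℝ)
      ≤ (#(P \ P₀) - #F).choose (m - #F) *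
          exp (-((m - #F : ℕ) * chernoffRate (1 / 2 - 7 * γ / 8) (1 / 2 - 5 * γ / 8))) := by
  set N := #(P \ P₀)
  set j := #F
  set X := nbhd E S
  have hjk : (j : ℝ) + 1 ≤ k := by exact_mod_cast hFk
  have hmN' : (m : ℝ) ≤ N := by exact_mod_cast hmN
  have hjm : j ≤ m := by
    have : (j : ℝ) ≤ m := by nlinarith [mul_le_mul_of_nonneg_right hγ₂.le m.cast_nonneg]
    exact_mod_cast this
  have hQF : #((P \ P₀) \ F) = N - j := card_sdiff_of_subset hF
  have hcardV : (Fintype.card V : ℝ) = (N + t) * l := by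
    rw [← card_univ, ← hPu, card_biUnion_id hPd hPl, ← card_sdiff_add_card_eq_card hP₀, ht]
    push_cast
    ring
  have hdef : ∀ A ∈ (P \ P₀) \ F, (#(A \ X) : ℝ) ∈ Set.Icc 0 (l : ℝ) := fun A hA =>
    ⟨by positivity, by
      exact_mod_cast (card_le_card sdiff_subset).trans
        (hPl A (mem_sdiff.1 (mem_sdiff.1 hA).1).1).le⟩
  have hsum : ∑ A ∈ (P \ P₀) \ F, (#(A \ X) : ℝ)
      ≤ (1 / 2 - 7 * γ / 8) * l * #((P \ P₀) \ F) := by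
    have hγN : γ * m ≤ γ * N := mul_le_mul_of_nonneg_left hmN' hγ.le
    have hbalance : (1 / 2 - γ) * (N + t) ≤ (1 / 2 - 7 * γ / 8) * (N - j) := by
      nlinarith [mul_nonneg hγ.le j.cast_nonneg, mul_nonneg hγ.le t.cast_nonneg]
    calc ∑ A ∈ (P \ P₀) \ F, (#(A \ X) : ℝ) ≤ Fintype.card V - #X := by
          rw [← Nat.cast_sum, ← Nat.cast_sub (card_le_univ X), Nat.cast_le]
          exact sum_card_sdiff_le_card_sub
            (hPd.subset (sdiff_subset.trans sdiff_subset)) X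
      _ ≤ (1 / 2 - γ) * ((N + t) * l) := by rw [hcardV] at hS ⊢; linarith
      _ ≤ (1 / 2 - 7 * γ / 8) * l * #((P \ P₀) \ F) := by
        rw [hQF, Nat.cast_sub (hjm.trans hmN)]
        nlinarith [mul_le_mul_of_nonneg_right hbalance (l.cast_nonneg : (0 : ℝ) ≤ l)]
  have hthreshold : (1 / 2 + γ / 2) * (l * (m + t)) ≤ (1 / 2 + 5 * γ / 8) * l * (m - j) := by
    have : (1 / 2 + γ / 2) * (m + t) ≤ (1 / 2 + 5 * γ / 8) * (m - j) := by
      nlinarith [mul_nonneg (sub_nonneg.2 hγ₂.le) j.cast_nonneg,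
        mul_nonneg (sub_nonneg.2 hγ₂.le) t.cast_nonneg]
    nlinarith [mul_le_mul_of_nonneg_left this (l.cast_nonneg : (0 : ℝ) ≤ l)]
  have htail := card_filter_powersetCard_le_sum ((P \ P₀) \ F) (r := m - j)
    (β := 1 / 2 - 7 * γ / 8) (τ := 1 / 2 - 5 * γ / 8) (by omega)
    (by exact_mod_cast hl) hdef (by linarith) (by linarith) hsum
  rw [hQF] at htail
  refine le_trans (Nat.cast_le.2 (card_le_card fun R hR => ?_)) htail
  rw [mem_filter] at hR ⊢
  refine ⟨hR.1, ?_⟩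
  push_cast [Nat.cast_sub hjm] at hR ⊢
  linarith

theorem card_lowCodegreeCover_le {γ : ℝ} (hγ : 0 < γ) (hγ₂ : γ < 1 / 2) (hl : 0 < l)
    (hE : ∀ e ∈ E, #e = k) (hk : 1 ≤ k)
    (hdeg : ∀ S : Finset V, #S = k - 1 → (1 / 2 + γ) * Fintype.card V ≤ #{e ∈ E | S ⊆ e})
    (hPd : (P : Set (Finset V)).PairwiseDisjoint id) (hPl : ∀ A ∈ P, #A = l)
    (hPu : P.biUnion id = univ) (hP₀ : P₀ ⊆ P) (ht : #P₀ = t) (hm : 8 * (k + t) ≤ γ * m)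
    (hmN : m ≤ #(P \ P₀)) :
    (#(lowCodegreeCover E P₀ (P \ P₀) k l m ((1 / 2 + γ / 2) * (l * (m + t)))) : ℝ)
      ≤ (#(P \ P₀)).choose m * (k * ((t + k) * l).choose (k - 1) *
          exp (k * chernoffRate (1 / 2 - 7 * γ / 8) (1 / 2 - 5 * γ / 8)) * (m + 1) ^ k *
          exp (-(chernoffRate (1 / 2 - 7 * γ / 8) (1 / 2 - 5 * γ / 8) * m))) := by
  set Q := P \ P₀
  set h := chernoffRate (1 / 2 - 7 * γ / 8) (1 / 2 - 5 * γ / 8)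
  have hh : 0 < h := chernoffRate_pos (by linarith) (by linarith)
  have hkm : k ≤ m := by
    have : (k : ℝ) ≤ m := by nlinarith [mul_le_mul_of_nonneg_right hγ₂.le m.cast_nonneg]
    exact_mod_cast this
  have hclasses : ∀ j, ∀ F ∈ Q.powersetCard j, #((P₀ ∪ F).biUnion id) = (t + j) * l := by
    intro j F hF
    obtain ⟨hFQ, hFj⟩ := mem_powersetCard.1 hF
    have hsub : P₀ ∪ F ⊆ P := union_subset hP₀ (hFQ.trans sdiff_subset)
    rw [card_biUnion_id (hPd.subset hsub) fun A hA => hPl A (hsub hA),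
      card_union_of_disjoint (disjoint_sdiff.mono_right hFQ), ht, hFj]
  calc (#(lowCodegreeCover E P₀ Q k l m ((1 / 2 + γ / 2) * (l * (m + t)))) : ℝ)
      ≤ ∑ j ∈ range k, ∑ F ∈ Q.powersetCard j, ∑ S ∈ ((P₀ ∪ F).biUnion id).powersetCard (k - 1),
          (#{R ∈ (Q \ F).powersetCard (m - j) | (((m - j) * l : ℕ) : ℝ)
            < ∑ A ∈ R, (#(A \ nbhd E S) : ℝ) + (1 / 2 + γ / 2) * (l * (m + t))} : ℝ) := by
        unfold lowCodegreeCover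
        exact_mod_cast card_biUnion_le.trans <| sum_le_sum fun j _ =>
          card_biUnion_le.trans <| sum_le_sum fun F _ =>
          card_biUnion_le.trans <| sum_le_sum fun S _ => card_image_le
    _ ≤ ∑ j ∈ range k, ∑ F ∈ Q.powersetCard j, ∑ S ∈ ((P₀ ∪ F).biUnion id).powersetCard (k - 1),
          ((#Q - j).choose (m - j) * exp (-((m - j : ℕ) * h)) : ℝ) := by
        gcongr with j hj F hF S hS
        obtain ⟨hFQ, rfl⟩ := mem_powersetCard.1 hF
        have hSk := (mem_powersetCard.1 hS).2
        refine card_deficient_le hγ hγ₂ hl hPd hPl hPu hP₀ ht hFQ (mem_range.1 hj) hm hmN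
          ((hdeg S hSk).trans ?_)
        exact_mod_cast card_filter_superset_le_card_nbhd fun e he => by rw [hE e he]; omega
    _ = ∑ j ∈ range k, ((#Q).choose j : ℝ) * (((t + j) * l).choose (k - 1) *
          ((#Q - j).choose (m - j) * exp (-((m - j : ℕ) * h)))) := by
        refine sum_congr rfl fun j _ => ?_
        rw [sum_congr rfl fun F hF => by rw [sum_const, card_powersetCard, hclasses j F hF],
          sum_const, card_powersetCard, nsmul_eq_mul, nsmul_eq_mul]
    _ ≤ _ := sum_choose_mul_choose_mul_exp_le (fun j => (t + j) * l)
          (fun _ _ hij => by dsimp only; gcongr) hh.le hkm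

end LowCodegree

/-- Proposition 2.4 (random sets of partition classes inherit the Dirac condition).
The random `m`-subset `𝒫'` of `𝒫 \ 𝒫₀` is chosen uniformly, so "with probability at
least `1 − e^{−√m}`" is expressed by counting the good `m`-subsets among all
`m`-subsets of `𝒫 \ 𝒫₀`. -/
theorem stmt_3 :
    ∀ γ : ℝ, 0 < γ → γ ≤ 1 →
    ∀ k t l : ℕ, 2 ≤ k → 1 ≤ t → 1 ≤ l →
    ∃ m₀ : ℕ, ∀ m : ℕ, m₀ ≤ m →
    ∃ n₀ : ℕ, ∀ n : ℕ, n₀ ≤ n → l ∣ n →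
    ∀ E : Finset (Finset (Fin n)),
      -- G is a k-graph
      (∀ e ∈ E, e.card = k) →
      -- G is an (n,k,γ)-graph
      (∀ S : Finset (Fin n), S.card = k - 1 →
        (1/2 + γ) * (n : ℝ) ≤ ((E.filter (fun e => S ⊆ e)).card : ℝ)) →
    -- 𝒫 is a partition of V(G) into sets of size l
    ∀ P : Finset (Finset (Fin n)),
      (∀ A ∈ P, A.card = l) →
      (P : Set (Finset (Fin n))).PairwiseDisjoint id →
      P.biUnion id = Finset.univ →
    -- 𝒫₀ ⊆ 𝒫 with |𝒫₀| = t
    ∀ P₀ : Finset (Finset (Fin n)), P₀ ⊆ P → P₀.card = t →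
      -- at least a (1 − e^{−√m})-fraction of the m-subsets 𝒫' of 𝒫 \ 𝒫₀ are such that
      -- G[⋃(𝒫₀ ∪ 𝒫')] has minimum codegree at least (1/2 + γ/2)·l·(m+t)
      (1 - Real.exp (-Real.sqrt m)) * ((((P \ P₀).powersetCard m).card : ℝ)) ≤
        (((((P \ P₀).powersetCard m)).filter (fun P' =>
            ∀ S : Finset (Fin n), S ⊆ (P₀ ∪ P').biUnion id → S.card = k - 1 →
              (1/2 + γ/2) * ((l : ℝ) * ((m : ℝ) + (t : ℝ))) ≤
                ((E.filter (fun e => S ⊆ e ∧ e ⊆ (P₀ ∪ P').biUnion id)).card : ℝ))).card : ℝ) := by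
  intro γ hγ _ k t l hk _ hl
  rcases le_or_gt (1 / 2) γ with hγ₂ | hγ₂
  · refine ⟨0, fun m _ => ⟨k, fun n hn _ E hE hdeg _ _ _ _ _ _ _ => absurd hγ₂ (not_le.2 ?_)⟩⟩
    exact lt_one_half_of_codegree_ge hE hk (by simpa) (by simpa using hdeg)
  set h := chernoffRate (1 / 2 - 7 * γ / 8) (1 / 2 - 5 * γ / 8)
  have hh : 0 < h := chernoffRate_pos (by linarith) (by linarith)
  obtain ⟨m₀, hm₀⟩ := Filter.eventually_atTop.1
    ((eventually_mul_pow_mul_exp_le (k * ((t + k) * l).choose (k - 1) * exp (k * h)) hh k).and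
      (Filter.eventually_ge_atTop ⌈8 * (k + t) / γ⌉₊))
  refine ⟨m₀, fun m hm => ⟨0, fun n _ _ E hE hdeg P hPl hPd hPu P₀ hP₀ ht => ?_⟩⟩
  obtain ⟨hsmall, hmγ⟩ := hm₀ m hm
  rcases lt_or_ge #(P \ P₀) m with hN | hN
  · simp [powersetCard_eq_empty.2 hN]
  have h8 : 8 * (k + t) ≤ γ * m := by
    have := Nat.ceil_le.1 hmγ
    rw [div_le_iff₀ hγ] at this
    linarith
  refine one_sub_mul_card_le_card_filter (T := lowCodegreeCover E P₀ (P \ P₀) k l m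
    ((1 / 2 + γ / 2) * (l * (m + t)))) (fun P' hP' hbad => ?_) ?_
  · push Not at hbad
    obtain ⟨S, hSU, hSk, hlow⟩ := hbad
    exact mem_lowCodegreeCover hPd hPl hP' hSU (by omega) hlow
  · calc _ ≤ _ := card_lowCodegreeCover_le hγ hγ₂ hl hE (by omega) (by simpa using hdeg) hPd hPl
          hPu hP₀ ht h8 hN
      _ ≤ (#(P \ P₀)).choose m * exp (-√m) := mul_le_mul_of_nonneg_left hsmall (by positivity)
      _ = _ := by rw [card_powersetCard, mul_comm]
end

section
/- For every integer k ≥ 2 and every constant γ > 0 there exist C > 0 and n₀ ∈ ℕ such that for all n ≥ n₀, every (n,k,γ)-graph G admits a C-normal perfect fractional matching. -/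
/-!
For graphs (`k = 2`) look for edge weights `x {u, w} = a u + a w`. The linear map sending `a` to
the resulting vertex loads satisfies `∑ v, a v * load v = ∑ e, x e ^ 2`, and since any two vertices
have a common neighbour its kernel is trivial; hence some `a` gives every vertex load `1`.
Comparing the load equations at a vertex of maximal and one of minimal weight, whose
neighbourhoods overlap in at least `2γn` vertices, traps every weight in `[γ/n, 2/n]`.

For `(k + 1)`-graphs, the link of a vertex `v` is a `k`-graph on `n - 1` vertices with the same
codegree bound, so by induction it carries a normal perfect fractional matching `Y v`. The
weighting `x e ∝ ∑ v ∈ e, Y v (e \ {v})` is normal, and it is perfect by double counting: the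
term `v = u` contributes the total weight `(n - 1)/k` of `Y u`, the others contribute the load
`1` of `u` in each `Y v`.
-/

open Finset

universe u

lemma LinearMap.exists_eqOn_of_injOn {ι K : Type*} [Field K] (V : Finset ι)
    (L : (ι → K) →ₗ[K] (ι → K)) (hL : ∀ a, (∀ u ∈ V, L a u = 0) → ∀ u ∈ V, a u = 0)
    (b : ι → K) : ∃ a, ∀ u ∈ V, L a u = b u := by
  let ext := Function.ExtendByZero.linearMap K (Subtype.val : V → ι)
  have hext (c : V → K) (u : V) : ext c u = c u := Subtype.val_injective.extend_apply c 0 u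
  let T := LinearMap.funLeft K K (Subtype.val : V → ι) ∘ₗ L ∘ₗ ext
  have hT : Function.Injective T := by
    refine (injective_iff_map_eq_zero T).2 fun c hc => funext fun u => ?_
    rw [Pi.zero_apply, ← hext c u]
    exact hL (ext c) (fun u hu => congrFun hc ⟨u, hu⟩) u u.2
  obtain ⟨c, hc⟩ := LinearMap.injective_iff_surjective.1 hT fun u => b u
  exact ⟨ext c, fun u hu => congrFun hc ⟨u, hu⟩⟩

namespace KGraph

variable {α : Type*}

def IsUniformOn (V : Finset α) (k : ℕ) (E : Finset (Finset α)) : Prop :=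
  ∀ e ∈ E, e ⊆ V ∧ #e = k

/-- `x` is `C`-normal at scale `s`; the paper takes `s = n ^ (k - 1)`. -/
def IsNormal (C s : ℝ) (E : Finset (Finset α)) (x : Finset α → ℝ) : Prop :=
  ∀ e ∈ E, 1 / (C * s) ≤ x e ∧ x e ≤ C / s

lemma IsUniformOn.subset_powersetCard {V : Finset α} {k : ℕ} {E : Finset (Finset α)}
    (hE : IsUniformOn V k E) : E ⊆ V.powersetCard k :=
  fun e he => mem_powersetCard.2 (hE e he)

variable [DecidableEq α]

def link (E : Finset (Finset α)) (v : α) : Finset (Finset α) :=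
  {e ∈ E | v ∈ e}.image (·.erase v)

def HasCodegreeAtLeast (V : Finset α) (k : ℕ) (E : Finset (Finset α)) (δ : ℝ) : Prop :=
  ∀ S ⊆ V, #S = k - 1 → δ ≤ #{e ∈ E | S ⊆ e}

def load (E : Finset (Finset α)) (x : Finset α → ℝ) (v : α) : ℝ :=
  ∑ e ∈ E with v ∈ e, x e

variable {E : Finset (Finset α)} {V : Finset α} {k : ℕ} {v : α}

lemma sum_link {M : Type*} [AddCommMonoid M] (f : Finset α → M) :
    ∑ t ∈ link E v, f t = ∑ e ∈ E with v ∈ e, f (e.erase v) :=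
  sum_image fun _ he _ he' h => erase_injOn' v (mem_filter.1 he).2 (mem_filter.1 he').2 h

lemma card_link : #(link E v) = #{e ∈ E | v ∈ e} :=
  card_image_of_injOn fun _ he _ he' h =>
    erase_injOn' v (mem_filter.1 he).2 (mem_filter.1 he').2 h

lemma filter_link (p : Finset α → Prop) [DecidablePred p] :
    {t ∈ link E v | p t} = link {e ∈ E | p (e.erase v)} v := by
  rw [link, link, filter_image, filter_filter, filter_filter]
  simp only [and_comm]

lemma insert_mem_of_mem_link {t : Finset α} (ht : t ∈ link E v) : insert v t ∈ E := by
  obtain ⟨e, he, rfl⟩ := mem_image.1 ht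
  rw [insert_erase (mem_filter.1 he).2]
  exact (mem_filter.1 he).1

lemma notMem_of_mem_link {t : Finset α} (ht : t ∈ link E v) : v ∉ t := by
  obtain ⟨e, -, rfl⟩ := mem_image.1 ht
  exact notMem_erase v e

lemma IsUniformOn.link (hE : IsUniformOn V (k + 1) E) (v : α) :
    IsUniformOn (V.erase v) k (link E v) := by
  intro t ht
  obtain ⟨e, he, rfl⟩ := mem_image.1 ht
  obtain ⟨heE, hve⟩ := mem_filter.1 he
  exact ⟨erase_subset_erase v (hE e heE).1, by rw [card_erase_of_mem hve, (hE e heE).2]; rfl⟩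

lemma HasCodegreeAtLeast.link {δ : ℝ} (hk : 1 ≤ k) (hE : HasCodegreeAtLeast V (k + 1) E δ)
    (hv : v ∈ V) :
    HasCodegreeAtLeast (V.erase v) k (link E v) δ := by
  intro S hS hSk
  obtain ⟨hSV, hvS⟩ := subset_erase.1 hS
  rw [filter_link, card_link, filter_filter]
  have hcard : #(insert v S) = k + 1 - 1 := by rw [card_insert_of_notMem hvS, hSk]; omega
  convert hE (insert v S) (insert_subset hv hSV) hcard using 4
  rw [insert_subset_iff, subset_erase]
  tauto

lemma HasCodegreeAtLeast.mono {δ δ' : ℝ} (hE : HasCodegreeAtLeast V k E δ) (h : δ' ≤ δ) :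
    HasCodegreeAtLeast V k E δ' :=
  fun S hS hSk => h.trans (hE S hS hSk)

lemma sum_mul_load (hE : ∀ e ∈ E, e ⊆ V) (a : α → ℝ) (x : Finset α → ℝ) :
    ∑ v ∈ V, a v * load E x v = ∑ e ∈ E, (∑ v ∈ e, a v) * x e := by
  simp only [load, mul_sum, sum_mul]
  refine sum_comm' fun v e => ?_
  simp only [mem_filter]
  exact ⟨fun h => ⟨h.2.2, h.2.1⟩, fun h => ⟨hE e h.2 h.1, h.2, h.1⟩⟩

lemma IsUniformOn.mul_sum_eq_card (hE : IsUniformOn V k E) {x : Finset α → ℝ}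
    (hx : ∀ v ∈ V, load E x v = 1) : k * ∑ e ∈ E, x e = #V := by
  calc (k : ℝ) * ∑ e ∈ E, x e = ∑ e ∈ E, (∑ _v ∈ e, (1 : ℝ)) * x e := by
        rw [mul_sum]
        refine sum_congr rfl fun e he => ?_
        rw [sum_const, (hE e he).2, nsmul_one]
    _ = ∑ v ∈ V, 1 * load E x v := (sum_mul_load (fun e he => (hE e he).1) 1 x).symm
    _ = #V := by simp [sum_congr rfl hx]

lemma load_link {u : α} (huv : u ≠ v) (y : Finset α → ℝ) :
    load (link E v) y u = ∑ e ∈ E with u ∈ e ∧ v ∈ e, y (e.erase v) := by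
  rw [load, filter_link, sum_link, filter_filter]
  refine sum_congr (filter_congr fun e _ => ?_) fun _ _ => rfl
  rw [mem_erase]
  tauto

def linkSum (Y : α → Finset α → ℝ) (e : Finset α) : ℝ :=
  ∑ v ∈ e, Y v (e.erase v)

lemma mul_load_linkSum {Y : α → Finset α → ℝ} (hE : IsUniformOn V (k + 1) E)
    (hY : ∀ v ∈ V, ∀ u ∈ V.erase v, load (link E v) (Y v) u = 1) {u : α} (hu : u ∈ V) :
    k * load E (linkSum Y) u = (k + 1) * (#V - 1) := by
  have hsplit : load E (linkSum Y) u = ∑ t ∈ link E u, Y u t +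
      ∑ e ∈ E with u ∈ e, ∑ v ∈ e.erase u, Y v (e.erase v) := by
    rw [sum_link, ← sum_add_distrib]
    exact sum_congr rfl fun e he => (add_sum_erase e _ (mem_filter.1 he).2).symm
  have hown : k * ∑ t ∈ link E u, Y u t = #V - 1 := by
    rw [(hE.link u).mul_sum_eq_card (hY u hu), cast_card_erase_of_mem hu]
  have hothers : ∑ e ∈ E with u ∈ e, ∑ v ∈ e.erase u, Y v (e.erase v) = #V - 1 := by
    calc _ = ∑ v ∈ V.erase u, ∑ e ∈ E with u ∈ e ∧ v ∈ e, Y v (e.erase v) := by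
          refine sum_comm' fun e v => ?_
          simp only [mem_filter, mem_erase]
          constructor
          · rintro ⟨⟨heE, hue⟩, hvu, hve⟩
            exact ⟨⟨heE, hue, hve⟩, hvu, (hE e heE).1 hve⟩
          · rintro ⟨⟨heE, hue, hve⟩, hvu, -⟩
            exact ⟨⟨heE, hue⟩, hvu, hve⟩
      _ = ∑ v ∈ V.erase u, 1 := sum_congr rfl fun v hv => by
          rw [← load_link (ne_of_mem_erase hv).symm]
          exact hY v (mem_of_mem_erase hv) u (mem_erase.2 ⟨(ne_of_mem_erase hv).symm, hu⟩)
      _ = #V - 1 := by rw [sum_const, nsmul_one, cast_card_erase_of_mem hu]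
  rw [hsplit, mul_add, hown, hothers]
  ring

lemma isNormal_linkSum {C : ℝ} {Y : α → Finset α → ℝ} (hC : 0 < C) (hk : 1 ≤ k) (hV : 2 ≤ #V)
    (hE : IsUniformOn V (k + 1) E)
    (hY : ∀ v ∈ V, IsNormal C (((#V : ℝ) - 1) ^ (k - 1)) (link E v) (Y v)) :
    IsNormal (k * 2 ^ k * C) ((#V : ℝ) ^ k) E
      (fun e => k / ((k + 1) * (#V - 1)) * linkSum Y e) := by
  obtain ⟨j, rfl⟩ : ∃ j, k = j + 1 := ⟨k - 1, by omega⟩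
  have hn : (2 : ℝ) ≤ #V := by exact_mod_cast hV
  set n : ℝ := (#V : ℝ)
  have hn1 : 0 < n - 1 := by linarith
  intro e he
  have hlink (v : α) (hv : v ∈ e) :=
    hY v ((hE e he).1 hv) (e.erase v) (mem_image_of_mem _ (mem_filter.2 ⟨he, hv⟩))
  simp only [Nat.add_sub_cancel] at hlink
  have hcard : (#e : ℝ) = j + 2 := by rw [(hE e he).2]; push_cast; ring
  have hlo := card_nsmul_le_sum e _ _ fun v hv => (hlink v hv).1
  have hhi := sum_le_card_nsmul e _ _ fun v hv => (hlink v hv).2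
  rw [nsmul_eq_mul, hcard] at hlo hhi
  have hc : (0 : ℝ) ≤ (j + 1 : ℕ) / (((j + 1 : ℕ) + 1) * (n - 1)) := by positivity
  have hpow2 : n ^ (j + 1) ≤ 2 ^ (j + 1) * (n - 1) ^ (j + 1) := by
    rw [← mul_pow]; exact pow_le_pow_left₀ (by linarith) (by linarith) _
  have hlow : C * (n - 1) ^ (j + 1) ≤ (j + 1 : ℕ) * 2 ^ (j + 1) * C * n ^ (j + 1) :=
    calc C * (n - 1) ^ (j + 1) ≤ C * n ^ (j + 1) := by gcongr; linarith
      _ ≤ ((j + 1 : ℕ) * 2 ^ (j + 1)) * (C * n ^ (j + 1)) := le_mul_of_one_le_left (by positivity)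
          (one_le_mul_of_one_le_of_one_le (by simp) (one_le_pow₀ one_le_two))
      _ = _ := by ring
  constructor
  · calc 1 / ((j + 1 : ℕ) * 2 ^ (j + 1) * C * n ^ (j + 1))
        ≤ 1 / (C * (n - 1) ^ (j + 1)) := one_div_le_one_div_of_le (by positivity) hlow
      _ ≤ (j + 1 : ℕ) / (C * (n - 1) ^ (j + 1)) :=
          div_le_div_of_nonneg_right (by simp) (by positivity)
      _ = (j + 1 : ℕ) / (((j + 1 : ℕ) + 1) * (n - 1)) * ((j + 2) * (1 / (C * (n - 1) ^ j))) := by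
          push_cast; field_simp; ring
      _ ≤ _ := mul_le_mul_of_nonneg_left hlo hc
  · calc (j + 1 : ℕ) / (((j + 1 : ℕ) + 1) * (n - 1)) * linkSum Y e
        ≤ (j + 1 : ℕ) / (((j + 1 : ℕ) + 1) * (n - 1)) * ((j + 2) * (C / (n - 1) ^ j)) :=
          mul_le_mul_of_nonneg_left hhi hc
      _ = (j + 1 : ℕ) * C / (n - 1) ^ (j + 1) := by push_cast; field_simp; ring
      _ ≤ (j + 1 : ℕ) * 2 ^ (j + 1) * C / n ^ (j + 1) := by
          rw [div_le_div_iff₀ (by positivity) (by positivity)]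
          calc _ ≤ (j + 1 : ℕ) * C * (2 ^ (j + 1) * (n - 1) ^ (j + 1)) := by gcongr
            _ = _ := by ring

lemma load_sum_eq_card_mul_add (a : α → ℝ) (u : α) :
    load E (fun e => ∑ y ∈ e, a y) u = #{e ∈ E | u ∈ e} * a u + ∑ t ∈ link E u, ∑ y ∈ t, a y := by
  rw [sum_link, load, ← nsmul_eq_mul, ← sum_const, ← sum_add_distrib]
  exact sum_congr rfl fun e he => (add_sum_erase e a (mem_filter.1 he).2).symm

lemma card_link_union_le (hE : IsUniformOn V 2 E) (x y : α) :
    #(link E x ∪ link E y) ≤ #V := by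
  have hsub (z : α) : link E z ⊆ V.powersetCard 1 :=
    (hE.link z).subset_powersetCard.trans (powersetCard_mono (erase_subset z V))
  simpa using card_le_card (union_subset (hsub x) (hsub y))

lemma inter_link_nonempty (hE : IsUniformOn V 2 E)
    (hdeg : ∀ x ∈ V, #V < 2 * #{e ∈ E | x ∈ e}) {x y : α} (hx : x ∈ V) (hy : y ∈ V) :
    (link E x ∩ link E y).Nonempty := by
  rw [← card_pos]
  have := card_union_add_card_inter (link E x) (link E y)
  have := card_link_union_le hE x y
  have := hdeg x hx
  have := hdeg y hy
  rw [card_link, card_link] at *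
  omega

lemma eq_zero_of_load_sum_eq_zero (hE : IsUniformOn V 2 E)
    (hdeg : ∀ x ∈ V, #V < 2 * #{e ∈ E | x ∈ e}) {a : α → ℝ}
    (ha : ∀ u ∈ V, load E (fun e => ∑ y ∈ e, a y) u = 0) {x : α} (hx : x ∈ V) : a x = 0 := by
  have hedge : ∀ e ∈ E, ∑ y ∈ e, a y = 0 := by
    have hsq : ∑ e ∈ E, (∑ y ∈ e, a y) ^ 2 = 0 := by
      simp only [sq, ← sum_mul_load (fun e he => (hE e he).1)]
      exact sum_eq_zero fun v hv => by rw [ha v hv, mul_zero]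
    intro e he
    exact pow_eq_zero_iff two_ne_zero |>.1 <|
      (sum_eq_zero_iff_of_nonneg fun e _ => sq_nonneg _).1 hsq e he
  have hlink (w : α) (t : Finset α) (ht : t ∈ link E w) : ∑ y ∈ t, a y = -a w := by
    have := hedge _ (insert_mem_of_mem_link ht)
    rw [sum_insert (notMem_of_mem_link ht)] at this
    linarith
  -- `x` has a neighbour `z`, and a common neighbour of `x` and `z` forces `a x = a z = -a x`
  obtain ⟨t, ht⟩ : (link E x).Nonempty := by simpa using inter_link_nonempty hE hdeg hx hx
  obtain ⟨htV, ht1⟩ := hE.link x t ht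
  obtain ⟨z, rfl⟩ := card_eq_one.1 ht1
  obtain ⟨s, hs⟩ := inter_link_nonempty hE hdeg hx (mem_of_mem_erase (htV (mem_singleton_self z)))
  have hxz : a z = -a x := by simpa using hlink x {z} ht
  have := (hlink x s (mem_inter.1 hs).1).symm.trans (hlink z s (mem_inter.1 hs).2)
  linarith

/-- `M`, `m` are the largest and smallest vertex weights, attained at vertices of degrees `dp`
and `dq` which have `c` common neighbours. -/
lemma extremal_weight_bounds {γ n dp dq c m M : ℝ} (hγ : 0 < γ) (hn : 0 < n)
    (hdp : (1 / 2 + γ) * n ≤ dp) (hdq : 0 ≤ dq) (hdqn : dq ≤ n) (hc : 0 ≤ c) (hcdp : c ≤ dp)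
    (hunion : dp + dq - c ≤ n) (hmM : m ≤ M) (hp : dp * (M + m) ≤ 1) (hq : 1 ≤ dq * (M + m))
    (hexchange : M * (c + dp - dq) ≤ m * (c + dq - dp)) :
    γ / n ≤ m ∧ M ≤ 2 / n := by
  have hMm : 0 < M + m := pos_of_mul_pos_right (by linarith) hdq
  have hM : 0 < M := by linarith
  have hdpq : dp ≤ dq := le_of_mul_le_mul_right (by linarith) hMm
  have hgap : 2 * γ * n ≤ c + dp - dq := by linarith
  have hm : 0 < m := by
    have : 0 < M * (c + dp - dq) := mul_pos hM (by nlinarith)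
    exact pos_of_mul_pos_left (this.trans_le hexchange) (by linarith)
  have hMm' : 2 * γ * M ≤ m := by
    have : M * (2 * γ * n) ≤ m * n := by
      calc M * (2 * γ * n) ≤ M * (c + dp - dq) := by gcongr
        _ ≤ m * (c + dq - dp) := hexchange
        _ ≤ m * n := by gcongr; linarith
    nlinarith
  have hMlo : 1 ≤ 2 * n * M := by nlinarith
  constructor
  · rw [div_le_iff₀ hn]; nlinarith
  · rw [le_div_iff₀ hn]; nlinarith

lemma vertex_weight_bounds {γ : ℝ} (hγ : 0 < γ) (hE : IsUniformOn V 2 E)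
    (hdeg : ∀ x ∈ V, (1 / 2 + γ) * #V ≤ #{e ∈ E | x ∈ e}) {a : α → ℝ}
    (ha : ∀ u ∈ V, load E (fun e => ∑ y ∈ e, a y) u = 1) {x : α} (hx : x ∈ V) :
    γ / #V ≤ a x ∧ a x ≤ 2 / #V := by
  obtain ⟨p, hp, hpmax⟩ := exists_max_image V a ⟨x, hx⟩
  obtain ⟨q, hq, hqmin⟩ := exists_min_image V a ⟨x, hx⟩
  have hn : (0 : ℝ) < #V := by exact_mod_cast card_pos.2 ⟨x, hx⟩
  set g : Finset α → ℝ := fun t => ∑ y ∈ t, a y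
  have hg (w : α) (t : Finset α) (ht : t ∈ link E w) : a q ≤ g t ∧ g t ≤ a p := by
    obtain ⟨htV, ht1⟩ := hE.link w t ht
    obtain ⟨z, rfl⟩ := card_eq_one.1 ht1
    have hz : z ∈ V := mem_of_mem_erase (htV (mem_singleton_self z))
    simpa [g] using And.intro (hqmin z hz) (hpmax z hz)
  have hunion := card_link_union_le hE p q
  have hBV := card_link_union_le hE q q
  set A := link E p
  set B := link E q
  have hsplit (s t : Finset (Finset α)) : ∑ u ∈ s, g u = ∑ u ∈ s ∩ t, g u + ∑ u ∈ s \ t, g u :=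
    (sum_inter_add_sum_sdiff s t g).symm
  have hcard (s t : Finset (Finset α)) : (#(s \ t) : ℝ) = #s - #(s ∩ t) := by
    rw [eq_sub_iff_add_eq]; exact_mod_cast card_sdiff_add_card_inter s t
  have heqp : #A * a p + ∑ t ∈ A, g t = 1 := by rw [card_link, ← ha p hp, load_sum_eq_card_mul_add]
  have heqq : #B * a q + ∑ t ∈ B, g t = 1 := by rw [card_link, ← ha q hq, load_sum_eq_card_mul_add]
  have hA := card_nsmul_le_sum A g (a q) fun t ht => (hg p t ht).1
  have hB := sum_le_card_nsmul B g (a p) fun t ht => (hg q t ht).2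
  have hAB := card_nsmul_le_sum (A \ B) g (a q) fun t ht => (hg p t (mem_sdiff.1 ht).1).1
  have hBA := sum_le_card_nsmul (B \ A) g (a p) fun t ht => (hg q t (mem_sdiff.1 ht).1).2
  rw [nsmul_eq_mul] at hA hB hAB hBA
  rw [hcard] at hAB hBA
  rw [inter_comm] at hBA
  have hexchange : a p * (#(A ∩ B) + #A - #B) ≤ a q * (#(A ∩ B) + #B - #A) := by
    rw [hsplit A B] at heqp
    rw [hsplit B A, inter_comm] at heqq
    nlinarith
  have hunion' : (#A + #B - #(A ∩ B) : ℝ) ≤ #V := by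
    have := card_union_add_card_inter A B
    rw [sub_le_iff_le_add]; exact_mod_cast (by omega : #A + #B ≤ #V + #(A ∩ B))
  obtain ⟨hlo, hhi⟩ := extremal_weight_bounds (dp := #A) (dq := #B) (c := #(A ∩ B)) hγ hn
    (card_link (E := E) ▸ hdeg p hp) (by positivity)
    (by rw [union_self] at hBV; exact_mod_cast hBV)
    (by positivity) (by exact_mod_cast card_le_card inter_subset_left) hunion' (hpmax q hq)
    (by nlinarith) (by nlinarith) hexchange
  exact ⟨hlo.trans (hqmin x hx), (hpmax x hx).trans hhi⟩

theorem exists_isNormal_load_eq_one_of_graph {γ : ℝ} (hγ : 0 < γ) (hE : IsUniformOn V 2 E)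
    (hdeg : HasCodegreeAtLeast V 2 E ((1 / 2 + γ) * #V)) :
    ∃ x, IsNormal (4 + γ⁻¹) #V E x ∧ ∀ v ∈ V, load E x v = 1 := by
  have hdeg' (x : α) (hx : x ∈ V) : (1 / 2 + γ) * #V ≤ #{e ∈ E | x ∈ e} := by
    simpa using hdeg {x} (singleton_subset_iff.2 hx) (card_singleton x)
  have hdirac (x : α) (hx : x ∈ V) : #V < 2 * #{e ∈ E | x ∈ e} := by
    have hn : (0 : ℝ) < #V := by exact_mod_cast card_pos.2 ⟨x, hx⟩
    have := hdeg' x hx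
    exact_mod_cast (by nlinarith : (#V : ℝ) < 2 * #{e ∈ E | x ∈ e})
  let L : (α → ℝ) →ₗ[ℝ] (α → ℝ) :=
    { toFun := fun a => load E (fun e => ∑ y ∈ e, a y)
      map_add' := fun a b => by ext u; simp [load, sum_add_distrib]
      map_smul' := fun c a => by ext u; simp [load, mul_sum] }
  obtain ⟨a, ha⟩ := L.exists_eqOn_of_injOn V
    (fun a ha _ hu => eq_zero_of_load_sum_eq_zero hE hdirac ha hu) 1
  refine ⟨fun e => ∑ y ∈ e, a y, fun e he => ?_, ha⟩
  have hb (y : α) (hy : y ∈ e) := vertex_weight_bounds hγ hE hdeg' ha ((hE e he).1 hy)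
  have hlo := card_nsmul_le_sum e a _ fun y hy => (hb y hy).1
  have hhi := sum_le_card_nsmul e a _ fun y hy => (hb y hy).2
  rw [(hE e he).2, two_nsmul] at hlo hhi
  have hn : (0 : ℝ) < #V := by
    obtain ⟨y, hy⟩ := card_pos.1 (by rw [(hE e he).2]; norm_num : 0 < #e)
    exact_mod_cast card_pos.2 ⟨y, (hE e he).1 hy⟩
  constructor
  · refine le_trans ?_ hlo
    rw [← add_div, div_le_div_iff₀ (by positivity) hn, ← mul_assoc,
      show (γ + γ) * (4 + γ⁻¹) = 8 * γ + 2 by field_simp; ring]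
    nlinarith
  · refine hhi.trans ?_
    rw [← add_div]
    exact div_le_div_of_nonneg_right (by linarith [inv_pos.2 hγ]) hn.le

theorem exists_isNormal_load_eq_one {γ : ℝ} (hγ : 0 < γ) {k : ℕ} (hk : 2 ≤ k) :
    ∃ C > 0, ∀ {α : Type u} [DecidableEq α] (V : Finset α) (E : Finset (Finset α)),
      k ≤ #V → IsUniformOn V k E → HasCodegreeAtLeast V k E ((1 / 2 + γ) * #V) →
      ∃ x, IsNormal C ((#V : ℝ) ^ (k - 1)) E x ∧ ∀ v ∈ V, load E x v = 1 := by
  induction k, hk using Nat.le_induction with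
  | base =>
    refine ⟨4 + γ⁻¹, by positivity, fun V E _ hE hdeg => ?_⟩
    simpa using exists_isNormal_load_eq_one_of_graph hγ hE hdeg
  | succ k hk ih =>
    obtain ⟨C, hC, hlinks⟩ := ih
    refine ⟨k * 2 ^ k * C, by positivity, fun {α} _ V E hV hE hdeg => ?_⟩
    have hY (v : α) (hv : v ∈ V) : ∃ y, IsNormal C (((#V : ℝ) - 1) ^ (k - 1)) (link E v) y ∧
        ∀ u ∈ V.erase v, load (link E v) y u = 1 := by
      have hdeg' := (hdeg.link (by omega) hv).mono
        (mul_le_mul_of_nonneg_left (by exact_mod_cast card_erase_le) (by linarith) :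
          (1 / 2 + γ) * (#(V.erase v) : ℝ) ≤ (1 / 2 + γ) * #V)
      have := hlinks (V.erase v) (link E v) (by rw [card_erase_of_mem hv]; omega) (hE.link v)
        hdeg'
      rwa [cast_card_erase_of_mem hv] at this
    choose! Y hY using hY
    refine ⟨fun e => k / ((k + 1) * (#V - 1)) * linkSum Y e,
      by simpa using isNormal_linkSum hC (by omega) (by omega) hE fun v hv => (hY v hv).1,
      fun u hu => ?_⟩
    have hload := mul_load_linkSum hE (fun v hv => (hY v hv).2) hu
    have hn : (1 : ℝ) < #V := by exact_mod_cast (by omega : 1 < #V)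
    rw [load, ← mul_sum, ← load, div_mul_eq_mul_div, hload, div_self]
    exact mul_ne_zero (by positivity) (by linarith)

end KGraph

/-- Lemma 4.2: every `(n,k,γ)`-graph (for `n` large) admits a `C`-normal perfect
fractional matching, i.e. an edge weighting `x` with
`1/(C n^{k−1}) ≤ x(e) ≤ C/n^{k−1}` for every edge `e` and
`Σ_{e ∋ v} x(e) = 1` for every vertex `v`. -/
theorem stmt_7 :
    ∀ k : ℕ, 2 ≤ k → ∀ γ : ℝ, 0 < γ →
    ∃ C : ℝ, 0 < C ∧ ∃ n₀ : ℕ, ∀ n : ℕ, n₀ ≤ n →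
    ∀ E : Finset (Finset (Fin n)),
      (∀ e ∈ E, e.card = k) →
      (∀ S : Finset (Fin n), S.card = k - 1 →
        (1/2 + γ) * (n : ℝ) ≤ ((E.filter (fun e => S ⊆ e)).card : ℝ)) →
      ∃ x : Finset (Fin n) → ℝ,
        (∀ e ∈ E, 1 / (C * (n : ℝ) ^ (k - 1)) ≤ x e ∧ x e ≤ C / (n : ℝ) ^ (k - 1)) ∧
        (∀ v : Fin n, ∑ e ∈ E.filter (fun e => v ∈ e), x e = 1) := by
  intro k hk γ hγ
  obtain ⟨C, hC, hmatch⟩ := KGraph.exists_isNormal_load_eq_one hγ hk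
  refine ⟨C, hC, k, fun n hn E hE hdeg => ?_⟩
  obtain ⟨x, hx, hload⟩ := hmatch (univ : Finset (Fin n)) E (by simpa using hn)
    (fun e he => ⟨subset_univ e, hE e he⟩) (fun S _ hS => by simpa using hdeg S hS)
  rw [card_univ, Fintype.card_fin] at hx
  exact ⟨x, hx, fun v => hload v (mem_univ v)⟩
end

section
/- Let k ≥ 2, let G be a k-graph, let M be an ordered (k−1)-tuple of distinct vertices of G, and let x: E(G) → ℝ⁺ be a positive r-upper-balanced edge weighting. Let X = (X_{−(k−2)},…) be the self-avoiding x-walk and Y = (Y_{−(k−2)},…) the simple x-walk on G, each with starting tuple M. Then for any positive integer q ≤ δ(G), the total variation distance between X_q and Y_q is at most q²r. -/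
/-! Both walks are compared with the simple walk restricted to self-avoiding histories. On such a
history a step of the simple walk to a fresh vertex is at most as likely as the same step of the
self-avoiding walk, whose normaliser omits the visited vertices; so this restriction is dominated
by both history distributions, and the two positions at time `q` differ on any event by at most
`1 - F_q`, where `F_j` is its total mass after `j` steps. Since every `(k−1)`-set lies in an edge,
the simple walk never stops, and from a self-avoiding history after `j` steps it returns to a
visited vertex with probability at most `j r`: adding one of the current `k − 1` vertices to the
window gives no edge, and each of the other `j` has probability at most `r`. Hence
`F_{j+1} ≥ F_j - j r`, and `F_q ≥ 1 - q² r`. -/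

open scoped Classical

noncomputable section

variable {V : Type*} [Fintype V] [DecidableEq V]

/-- An edge weighting extended by zero to non-edges. -/
def xw (E : Finset (Finset V)) (x : Finset V → ℝ) (e : Finset V) : ℝ :=
  if e ∈ E then x e else 0

/-- Unnormalised transition weight of an `x`-walk on the `k`-graph with edge set `E`:
the history `h` of the walk is stored most-recent-first, and the weight of moving to
`v` is `x` of the edge formed by the last `k−1` visited vertices together with `v`
(zero for non-edges); for the self-avoiding walk (`sa = true`) previously visited
vertices get weight zero. -/
def stepw (k : ℕ) (E : Finset (Finset V)) (x : Finset V → ℝ) (sa : Bool)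
    (h : List V) (v : V) : ℝ :=
  if sa = true ∧ v ∈ h then 0 else xw E x (insert v (h.take (k-1)).toFinset)

/-- Transition probability of the `x`-walk (zero if the walk has terminated). -/
def trp (k : ℕ) (E : Finset (Finset V)) (x : Finset V → ℝ) (sa : Bool)
    (h : List V) (v : V) : ℝ :=
  stepw k E x sa h v / ∑ w : V, stepw k E x sa h w

/-- The distribution of the history (most-recent-first) of the `x`-walk after `j`
steps, given the distribution `ν` of the initial history. -/
def walkDist (k : ℕ) (E : Finset (Finset V)) (x : Finset V → ℝ) (sa : Bool)
    (ν : List V → ℝ) : ℕ → List V → ℝ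
  | 0, l => ν l
  | _+1, [] => 0
  | j+1, v :: t => walkDist k E x sa ν j t * trp k E x sa t v

/-- The probability that the `x`-walk is at the vertex `v` at time `q`. -/
def headProb (k : ℕ) (E : Finset (Finset V)) (x : Finset V → ℝ) (sa : Bool)
    (ν : List V → ℝ) (q : ℕ) (v : V) : ℝ :=
  ∑ f : Fin (k - 1 + q) → V,
    if (List.ofFn f).head? = some v then walkDist k E x sa ν q (List.ofFn f) else 0

/-- The initial history (most-recent-first) determined by a starting
`(k−1)`-tuple `S`. -/
def startList {k : ℕ} (S : Fin (k-1) → V) : List V := (List.ofFn S).reverse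

/-- The initial history distribution concentrated on the starting tuple `S`. -/
def startDist {k : ℕ} (S : Fin (k-1) → V) : List V → ℝ :=
  fun l => if l = startList S then 1 else 0

/-- `x` is `r`-upper-balanced: every transition probability of an `x`-walk is at most
`r`. -/
def UpperBalanced (k : ℕ) (E : Finset (Finset V)) (x : Finset V → ℝ) (r : ℝ) : Prop :=
  ∀ S : Finset V, S.card = k - 1 → (∃ u, insert u S ∈ E) →
    ∀ v, insert v S ∈ E →
      x (insert v S) / (∑ v' : V, xw E x (insert v' S)) ≤ r

set_option linter.unusedSectionVars false

variable {k : ℕ} {E : Finset (Finset V)} {x : Finset V → ℝ}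

def window (k : ℕ) (h : List V) : Finset V := (h.take (k - 1)).toFinset

theorem List.Nodup.card_toFinset_take {α : Type*} [DecidableEq α] {l : List α} (hl : l.Nodup)
    {n : ℕ} (hn : n ≤ l.length) :
    (l.take n).toFinset.card = n := by
  rw [List.toFinset_card_of_nodup ((List.take_sublist _ _).nodup hl), List.length_take]
  omega

theorem window_subset (h : List V) : window k h ⊆ h.toFinset := fun v hv => by
  rw [window, List.mem_toFinset] at hv
  exact List.mem_toFinset.2 ((List.take_sublist _ _).subset hv)

theorem exists_insert_mem_of_card_filter_pos (hE : ∀ e ∈ E, e.card = k) (hk : 0 < k)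
    {S : Finset V} (hS : S.card = k - 1) (hpos : 0 < (E.filter fun e => S ⊆ e).card) :
    ∃ v, insert v S ∈ E := by
  obtain ⟨e, he⟩ := Finset.card_pos.1 hpos
  rw [Finset.mem_filter] at he
  obtain ⟨v, -, rfl⟩ := Finset.exists_eq_insert_iff.2 ⟨he.2, by rw [hS, hE e he.1]; omega⟩
  exact ⟨v, he.1⟩

theorem xw_nonneg (hx : ∀ e ∈ E, 0 ≤ x e) (e : Finset V) : 0 ≤ xw E x e := by
  unfold xw
  split_ifs with he
  exacts [hx e he, le_rfl]

theorem stepw_false (h : List V) (v : V) :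
    stepw k E x false h v = xw E x (insert v (window k h)) := by
  simp [stepw, window]

theorem stepw_nonneg (hx : ∀ e ∈ E, 0 ≤ x e) (sa : Bool) (h : List V) (v : V) :
    0 ≤ stepw k E x sa h v := by
  unfold stepw
  split_ifs
  exacts [le_rfl, xw_nonneg hx _]

theorem trp_nonneg (hx : ∀ e ∈ E, 0 ≤ x e) (sa : Bool) (h : List V) (v : V) :
    0 ≤ trp k E x sa h v :=
  div_nonneg (stepw_nonneg hx sa h v) (Finset.sum_nonneg fun w _ => stepw_nonneg hx sa h w)

theorem sum_trp_le_one (sa : Bool) (h : List V) : ∑ v, trp k E x sa h v ≤ 1 := by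
  simp only [trp, ← Finset.sum_div]
  exact div_self_le_one _

theorem sum_trp_false_eq_one (hx : ∀ e ∈ E, 0 < x e) {h : List V} {v : V}
    (hv : insert v (window k h) ∈ E) : ∑ w, trp k E x false h w = 1 := by
  have hpos : 0 < ∑ w, stepw k E x false h w := by
    refine lt_of_lt_of_le ?_ (Finset.single_le_sum
      (fun w _ => stepw_nonneg (fun e he => (hx e he).le) false h w) (Finset.mem_univ v))
    rw [stepw_false, xw, if_pos hv]
    exact hx _ hv
  simp only [trp, ← Finset.sum_div]
  exact div_self hpos.ne'

/-- Removing the visited vertices from the support only shrinks the normaliser. -/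
theorem trp_false_le_trp_true (hx : ∀ e ∈ E, 0 ≤ x e) {h : List V} {v : V} (hv : v ∉ h) :
    trp k E x false h v ≤ trp k E x true h v := by
  have hnum : stepw k E x true h v = stepw k E x false h v := by simp [stepw, hv]
  have hden : ∑ w, stepw k E x true h w ≤ ∑ w, stepw k E x false h w :=
    Finset.sum_le_sum fun w _ => by
      unfold stepw
      split_ifs <;> simp_all [xw_nonneg hx]
  unfold trp
  rw [hnum]
  rcases (Finset.sum_nonneg fun w _ => stepw_nonneg hx true h w).eq_or_lt with h0 | h0
  · have : stepw k E x true h v = 0 := le_antisymm (h0 ▸ Finset.single_le_sum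
      (fun w _ => stepw_nonneg hx true h w) (Finset.mem_univ v)) (stepw_nonneg hx true h v)
    rw [← hnum, this, zero_div, zero_div]
  · exact div_le_div_of_nonneg_left (stepw_nonneg hx false h v) h0 hden

theorem UpperBalanced.nonneg {r : ℝ} (hbal : UpperBalanced k E x r) (hx : ∀ e ∈ E, 0 < x e)
    {S : Finset V} (hS : S.card = k - 1) {v : V} (hv : insert v S ∈ E) : 0 ≤ r := by
  have hden : 0 < ∑ w, xw E x (insert w S) := by
    refine lt_of_lt_of_le ?_ (Finset.single_le_sum
      (fun w _ => xw_nonneg (fun e he => (hx e he).le) _) (Finset.mem_univ v))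
    rw [xw, if_pos hv]
    exact hx _ hv
  exact (div_pos (hx _ hv) hden).le.trans (hbal S hS ⟨v, hv⟩ v hv)

theorem UpperBalanced.trp_false_le {r : ℝ} (hbal : UpperBalanced k E x r) (hr : 0 ≤ r)
    {h : List V} (hW : (window k h).card = k - 1) (v : V) : trp k E x false h v ≤ r := by
  simp only [trp, stepw_false]
  by_cases hv : insert v (window k h) ∈ E
  · rw [xw, if_pos hv]
    exact hbal _ hW ⟨v, hv⟩ v hv
  · rw [xw, if_neg hv, zero_div]
    exact hr

theorem sum_trp_false_visited_le (hE : ∀ e ∈ E, e.card = k) (hk : 0 < k) {r : ℝ}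
    (hbal : UpperBalanced k E x r) (hr : 0 ≤ r) {h : List V} (hh : h.Nodup) {j : ℕ}
    (hlen : h.length = k - 1 + j) : ∑ v ∈ h.toFinset, trp k E x false h v ≤ j * r := by
  have hW : (window k h).card = k - 1 := hh.card_toFinset_take (by omega)
  have hwindow : ∑ v ∈ window k h, trp k E x false h v = 0 :=
    Finset.sum_eq_zero fun v hv => by
      rw [trp, stepw_false, Finset.insert_eq_of_mem hv, xw,
        if_neg fun hWE => by have := hE _ hWE; omega, zero_div]
  have hcard : (h.toFinset \ window k h).card = j := by
    rw [Finset.card_sdiff_of_subset (window_subset h), List.toFinset_card_of_nodup hh, hW]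
    omega
  rw [← Finset.sum_sdiff (window_subset h), hwindow, add_zero]
  calc ∑ v ∈ h.toFinset \ window k h, trp k E x false h v
      ≤ ∑ _v ∈ h.toFinset \ window k h, r :=
        Finset.sum_le_sum fun v _ => hbal.trp_false_le hr hW v
    _ = j * r := by rw [Finset.sum_const, hcard, nsmul_eq_mul]

theorem one_sub_le_sum_trp_false_fresh (hE : ∀ e ∈ E, e.card = k) (hk : 0 < k)
    (hx : ∀ e ∈ E, 0 < x e) {r : ℝ} (hbal : UpperBalanced k E x r) (hr : 0 ≤ r)
    (hdeg : ∀ S : Finset V, S.card = k - 1 → ∃ v, insert v S ∈ E)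
    {h : List V} (hh : h.Nodup) {j : ℕ} (hlen : h.length = k - 1 + j) :
    1 - j * r ≤ ∑ v, if v ∈ h then 0 else trp k E x false h v := by
  obtain ⟨u, hu⟩ := hdeg _ (hh.card_toFinset_take (by omega) : (window k h).card = k - 1)
  have hsplit := Finset.sum_filter_add_sum_filter_not Finset.univ (· ∈ h) (trp k E x false h)
  rw [sum_trp_false_eq_one hx hu, show Finset.univ.filter (· ∈ h) = h.toFinset by ext; simp]
    at hsplit
  rw [Finset.sum_ite, Finset.sum_const_zero, zero_add]
  linarith [sum_trp_false_visited_le hE hk hbal hr hh hlen]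

theorem walkDist_nonneg (hx : ∀ e ∈ E, 0 ≤ x e) {sa : Bool} {ν : List V → ℝ} (hν : 0 ≤ ν) :
    ∀ j l, 0 ≤ walkDist k E x sa ν j l
  | 0, l => hν l
  | _ + 1, [] => le_rfl
  | j + 1, v :: t => mul_nonneg (walkDist_nonneg hx hν j t) (trp_nonneg hx sa t v)

theorem walkDist_false_le_true (hx : ∀ e ∈ E, 0 ≤ x e) {ν : List V → ℝ} (hν : 0 ≤ ν) :
    ∀ j l, l.Nodup → walkDist k E x false ν j l ≤ walkDist k E x true ν j l
  | 0, _, _ => le_rfl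
  | _ + 1, [], _ => le_rfl
  | j + 1, v :: t, hl =>
    mul_le_mul (walkDist_false_le_true hx hν j t (List.nodup_cons.1 hl).2)
      (trp_false_le_trp_true hx (List.nodup_cons.1 hl).1) (trp_nonneg hx false t v)
      (walkDist_nonneg hx hν j t)

theorem sum_ofFn_succ {α β : Type*} [Fintype α] [AddCommMonoid β] (m : ℕ) (g : List α → β) :
    ∑ f : Fin (m + 1) → α, g (List.ofFn f) = ∑ t : Fin m → α, ∑ v, g (v :: List.ofFn t) := by
  rw [← Fintype.sum_prod_type_right (fun p : α × (Fin m → α) => g (p.1 :: List.ofFn p.2))]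
  exact (Fintype.sum_equiv (Fin.consEquiv fun _ => α) _ _ fun p => by
    simp [Fin.consEquiv, List.ofFn_succ]).symm

theorem sum_walkDist_le_one (hx : ∀ e ∈ E, 0 ≤ x e) {sa : Bool} {ν : List V → ℝ} (hν0 : 0 ≤ ν)
    {n : ℕ} (hν : ∑ f : Fin n → V, ν (List.ofFn f) ≤ 1) :
    ∀ j, ∑ f : Fin (n + j) → V, walkDist k E x sa ν j (List.ofFn f) ≤ 1
  | 0 => hν
  | j + 1 => calc
      ∑ f : Fin (n + j + 1) → V, walkDist k E x sa ν (j + 1) (List.ofFn f)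
        = ∑ t : Fin (n + j) → V,
            walkDist k E x sa ν j (List.ofFn t) * ∑ v, trp k E x sa (List.ofFn t) v := by
          simp only [sum_ofFn_succ, walkDist, Finset.mul_sum]
      _ ≤ ∑ t : Fin (n + j) → V, walkDist k E x sa ν j (List.ofFn t) :=
          Finset.sum_le_sum fun t _ => mul_le_of_le_one_right
            (walkDist_nonneg hx hν0 j _) (sum_trp_le_one sa _)
      _ ≤ 1 := sum_walkDist_le_one hx hν0 hν j

theorem sum_startDist (M : Fin (k - 1) → V) :
    ∑ f : Fin (k - 1) → V, startDist M (List.ofFn f) = 1 := by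
  have hlen : (startList M).length = k - 1 := by simp [startList]
  obtain ⟨f₀, hf₀⟩ : ∃ f₀ : Fin (k - 1) → V, List.ofFn f₀ = startList M :=
    ⟨_, (List.ofFn_congr hlen (startList M).get).symm.trans (List.ofFn_get _)⟩
  simp only [startDist, ← hf₀, List.ofFn_inj]
  simp

theorem startDist_nonneg (M : Fin (k - 1) → V) : 0 ≤ startDist M := fun l => by
  unfold startDist
  split_ifs <;> norm_num

theorem startList_nodup {M : Fin (k - 1) → V} (hM : Function.Injective M) :
    (startList M).Nodup := by
  simpa [startList] using List.nodup_ofFn.2 hM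

def freshMass (k : ℕ) (E : Finset (Finset V)) (x : Finset V → ℝ) (ν : List V → ℝ) (j : ℕ) :
    ℝ :=
  ∑ f : Fin (k - 1 + j) → V,
    {l : List V | l.Nodup}.indicator (walkDist k E x false ν j) (List.ofFn f)

theorem indicator_walkDist_le (hx : ∀ e ∈ E, 0 ≤ x e) {sa : Bool} {ν : List V → ℝ} (hν : 0 ≤ ν)
    (j : ℕ) (l : List V) : {l : List V | l.Nodup}.indicator (walkDist k E x sa ν j) l ≤
      walkDist k E x sa ν j l :=
  Set.indicator_le_self' (fun l _ => walkDist_nonneg hx hν j l) l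

theorem indicator_walkDist_false_le_true (hx : ∀ e ∈ E, 0 ≤ x e) {ν : List V → ℝ} (hν : 0 ≤ ν)
    (j : ℕ) (l : List V) : {l : List V | l.Nodup}.indicator (walkDist k E x false ν j) l ≤
      walkDist k E x true ν j l := by
  by_cases hl : l.Nodup
  · rw [Set.indicator_of_mem (show l ∈ {l : List V | l.Nodup} from hl)]
    exact walkDist_false_le_true hx hν j l hl
  · rw [Set.indicator_of_notMem (show l ∉ {l : List V | l.Nodup} from hl)]
    exact walkDist_nonneg hx hν j l

theorem freshMass_le_one (hx : ∀ e ∈ E, 0 ≤ x e) {ν : List V → ℝ} (hν0 : 0 ≤ ν)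
    (hν : ∑ f : Fin (k - 1) → V, ν (List.ofFn f) ≤ 1) (j : ℕ) : freshMass k E x ν j ≤ 1 :=
  (Finset.sum_le_sum fun f _ => indicator_walkDist_le hx hν0 j (List.ofFn f)).trans
    (sum_walkDist_le_one hx hν0 hν j)

theorem freshMass_zero {M : Fin (k - 1) → V} (hM : Function.Injective M) :
    freshMass k E x (startDist M) 0 = 1 := by
  refine (Finset.sum_congr rfl fun f _ => ?_).trans (sum_startDist M)
  by_cases hf : List.ofFn f = startList M
  · rw [Set.indicator_of_mem (by rw [hf]; exact startList_nodup hM)]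
    rfl
  · rw [show startDist M (List.ofFn f) = 0 from if_neg hf]
    exact Set.indicator_apply_eq_zero.2 fun _ => if_neg hf

theorem one_sub_mul_freshMass_le_succ (hE : ∀ e ∈ E, e.card = k) (hk : 0 < k)
    (hx : ∀ e ∈ E, 0 < x e) {r : ℝ} (hbal : UpperBalanced k E x r) (hr : 0 ≤ r)
    (hdeg : ∀ S : Finset V, S.card = k - 1 → ∃ v, insert v S ∈ E)
    {ν : List V → ℝ} (hν : 0 ≤ ν) (j : ℕ) :
    (1 - j * r) * freshMass k E x ν j ≤ freshMass k E x ν (j + 1) := by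
  have hstep : freshMass k E x ν (j + 1) = ∑ t : Fin (k - 1 + j) → V,
      {l : List V | l.Nodup}.indicator (walkDist k E x false ν j) (List.ofFn t) *
        ∑ v, if v ∈ List.ofFn t then 0 else trp k E x false (List.ofFn t) v := by
    refine (sum_ofFn_succ _ _).trans (Finset.sum_congr rfl fun t _ => ?_)
    rw [Finset.mul_sum]
    refine Finset.sum_congr rfl fun v _ => ?_
    by_cases hl : (List.ofFn t).Nodup <;> by_cases hv : v ∈ List.ofFn t <;>
      simp [walkDist, hl, hv]
  rw [hstep, freshMass, Finset.mul_sum]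
  refine Finset.sum_le_sum fun t _ => ?_
  by_cases hl : (List.ofFn t).Nodup
  · rw [Set.indicator_of_mem (show List.ofFn t ∈ {l : List V | l.Nodup} from hl), mul_comm]
    exact mul_le_mul_of_nonneg_left
      (one_sub_le_sum_trp_false_fresh hE hk hx hbal hr hdeg hl (List.length_ofFn))
      (walkDist_nonneg (fun e he => (hx e he).le) hν j _)
  · simp [Set.indicator_of_notMem (show List.ofFn t ∉ {l : List V | l.Nodup} from hl)]

theorem one_sub_sq_mul_le_freshMass (hE : ∀ e ∈ E, e.card = k) (hk : 0 < k)
    (hx : ∀ e ∈ E, 0 < x e) {r : ℝ} (hbal : UpperBalanced k E x r) (hr : 0 ≤ r)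
    (hdeg : ∀ S : Finset V, S.card = k - 1 → ∃ v, insert v S ∈ E)
    {M : Fin (k - 1) → V} (hM : Function.Injective M) :
    ∀ j : ℕ, 1 - (j : ℝ) ^ 2 * r ≤ freshMass k E x (startDist M) j
  | 0 => by simp [freshMass_zero hM]
  | j + 1 => by
    have hle : freshMass k E x (startDist M) j ≤ 1 :=
      freshMass_le_one (fun e he => (hx e he).le) (startDist_nonneg M) (sum_startDist M).le j
    have hjr : 0 ≤ (j : ℝ) * r := mul_nonneg j.cast_nonneg hr
    have hstep := one_sub_mul_freshMass_le_succ hE hk hx hbal hr hdeg (startDist_nonneg M) j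
    have ih := one_sub_sq_mul_le_freshMass hE hk hx hbal hr hdeg hM j
    push_cast
    linarith [mul_le_mul_of_nonneg_left hle hjr]

theorem sub_sum_le_of_le {ι : Type*} [Fintype ι] (A : Finset ι) {P Q N : ι → ℝ}
    (hNP : ∀ i, N i ≤ P i) (hNQ : ∀ i, N i ≤ Q i) :
    ∑ i ∈ A, P i - ∑ i ∈ A, Q i ≤ ∑ i, P i - ∑ i, N i := by
  calc ∑ i ∈ A, P i - ∑ i ∈ A, Q i ≤ ∑ i ∈ A, (P i - N i) := by
        rw [Finset.sum_sub_distrib]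
        exact sub_le_sub_left (Finset.sum_le_sum fun i _ => hNQ i) _
    _ ≤ ∑ i, (P i - N i) := Finset.sum_le_univ_sum_of_nonneg fun i => sub_nonneg.2 (hNP i)
    _ = ∑ i, P i - ∑ i, N i := Finset.sum_sub_distrib _ _

theorem abs_sum_sub_sum_le {ι : Type*} [Fintype ι] (A : Finset ι) {P Q N : ι → ℝ}
    (hNP : ∀ i, N i ≤ P i) (hNQ : ∀ i, N i ≤ Q i) (hP : ∑ i, P i ≤ 1) (hQ : ∑ i, Q i ≤ 1) :
    |∑ i ∈ A, P i - ∑ i ∈ A, Q i| ≤ 1 - ∑ i, N i :=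
  abs_sub_le_iff.2 ⟨(sub_sum_le_of_le A hNP hNQ).trans (by linarith),
    (sub_sum_le_of_le A hNQ hNP).trans (by linarith)⟩

theorem sum_headProb (sa : Bool) (ν : List V → ℝ) (q : ℕ) (T : Finset V) :
    ∑ v ∈ T, headProb k E x sa ν q v =
      ∑ f : Fin (k - 1 + q) → V with ∃ v ∈ T, (List.ofFn f).head? = some v,
        walkDist k E x sa ν q (List.ofFn f) := by
  simp only [headProb, Finset.sum_filter]
  rw [Finset.sum_comm]
  refine Finset.sum_congr rfl fun f _ => ?_
  cases (List.ofFn f).head? with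
  | none => simp
  | some u => by_cases hu : u ∈ T <;> simp [hu]

/-- Lemma 5.2: coupling the self-avoiding and the simple `x`-walk. If `x` is a positive
`r`-upper-balanced edge weighting of a `k`-graph `G` and `q ≤ δ(G)` is a positive
integer, then the total variation distance between the time-`q` positions `X_q` and
`Y_q` of the self-avoiding and the simple `x`-walk started at the same tuple `M` is at
most `q² r`; total variation distance is expressed as the supremum over vertex sets
`T` of the difference of the probabilities of being in `T`. -/
theorem stmt_9 (k : ℕ) (hk : 2 ≤ k) (E : Finset (Finset V))
    (hE : ∀ e ∈ E, e.card = k)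
    (x : Finset V → ℝ) (hxpos : ∀ e ∈ E, 0 < x e)
    (r : ℝ) (hbal : UpperBalanced k E x r)
    (M : Fin (k-1) → V) (hM : Function.Injective M)
    (q : ℕ) (hq1 : 1 ≤ q)
    (hqδ : ∀ S : Finset V, S.card = k - 1 → q ≤ (E.filter (fun e => S ⊆ e)).card) :
    ∀ T : Finset V,
      |(∑ v ∈ T, headProb k E x true (startDist M) q v) -
       (∑ v ∈ T, headProb k E x false (startDist M) q v)| ≤ (q : ℝ)^2 * r := by
  intro T
  have hk₀ : 0 < k := by omega
  have hx₀ : ∀ e ∈ E, 0 ≤ x e := fun e he => (hxpos e he).le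
  have hdeg : ∀ S : Finset V, S.card = k - 1 → ∃ v, insert v S ∈ E := fun S hS =>
    exists_insert_mem_of_card_filter_pos hE hk₀ hS (hq1.trans (hqδ S hS))
  have hMcard : (List.ofFn M).toFinset.card = k - 1 := by
    rw [List.toFinset_card_of_nodup (List.nodup_ofFn.2 hM), List.length_ofFn]
  obtain ⟨v, hv⟩ := hdeg _ hMcard
  have hr : 0 ≤ r := hbal.nonneg hxpos hMcard hv
  have hfresh := one_sub_sq_mul_le_freshMass hE hk₀ hxpos hbal hr hdeg hM q
  rw [sum_headProb, sum_headProb]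
  refine (abs_sum_sub_sum_le _
    (fun f => indicator_walkDist_false_le_true hx₀ (startDist_nonneg M) q (List.ofFn f))
    (fun f => indicator_walkDist_le hx₀ (startDist_nonneg M) q (List.ofFn f))
    (sum_walkDist_le_one hx₀ (startDist_nonneg M) (sum_startDist M).le q)
    (sum_walkDist_le_one hx₀ (startDist_nonneg M) (sum_startDist M).le q)).trans ?_
  rw [freshMass] at hfresh
  linarith
end
end
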